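/- arXiv:1301.3581 — 3 statements merged into one kernel-verified Lean document; each statement's English description precedes it below -/
import Mathlib

section
/- Fix 1 ≤ i < j ≤ m and nonnegative integers n_1,...,n_m, and let s = n_i + n_j. Define f_{ij}(z) = det(X' W_n(z) X) where W_n(z) = diag(n_1 w_1, ..., z w_i, ..., (s-z) w_j, ..., n_m w_m) replaces the i-th and j-th diagonal entries by z w_i and (s-z) w_j. Then f_{ij}(z) = A·z·(s-z) + B·z + C·(s-z) + D for some constants A, B, C, D, with D = f_{ij} evaluated with both i-th and j-th counts set to 0, and if s > 0 then A = (2/s²)(2 f_{ij}(s/2) - f_{ij}(0) - f_{ij}(s)), B = (f_{ij}(s) - D)/s, C = (f_{ij}(0) - D)/s. -/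
/-!
Writing `Xᵀ W X = ∑ₖ wₖ nₖ xₖ xₖᵀ` over the rows `xₖ` of `X`, exchanging counts between the
design points `i` and `j` perturbs `M = Xᵀ W X|_{nᵢ = nⱼ = 0}` by `z wᵢ xᵢxᵢᵀ + (s - z) wⱼ xⱼxⱼᵀ`.
The determinant is affine along any rank-one direction, so `(a, b) ↦ det (M + a P + b Q)` is
bi-affine; substituting `a = z`, `b = s - z` gives the stated form, and evaluating it at
`z = 0, s/2, s` recovers the coefficients.
-/

open Matrix

/-- The exchange function f_{ij}(z): the D-criterion with the i-th count replaced by z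
and the j-th count by s - z, where s = nᵢ + nⱼ. -/
noncomputable def Fij (m d : ℕ) (X : Matrix (Fin m) (Fin d) ℝ) (w : Fin m → ℝ)
    (n : Fin m → ℕ) (i j : Fin m) (z : ℝ) : ℝ :=
  (Xᵀ * Matrix.diagonal
      (fun k => (if k = i then z else if k = j then ((n i : ℝ) + n j) - z else (n k : ℝ)) * w k)
    * X).det

namespace Matrix

variable {n R : Type*} [Fintype n] [DecidableEq n] [CommRing R]

theorem exists_det_add_smul_vecMulVec (M : Matrix n n R) (u v : n → R) :
    ∃ c : R, ∀ a : R, det (M + a • vecMulVec u v) = det M + a * c := by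
  -- By the Schur complement, `det (M + a u vᵀ)` is the determinant of a bordered matrix in
  -- which `a` enters a single row linearly.
  let B : R → Matrix (n ⊕ Unit) (n ⊕ Unit) R := fun a =>
    fromBlocks M (-replicateCol Unit u) (replicateRow Unit (a • v)) 1
  have hB : ∀ a, det (M + a • vecMulVec u v) = det (B a) := by
    intro a
    rw [det_fromBlocks_one₂₂]
    congr 1
    ext p q
    simp [vecMulVec_apply, mul_apply]
  have hrow : ∀ a, B a = (B 0).updateRow (Sum.inr ()) (B 0 (Sum.inr ()) + a • Sum.elim v 0) := by
    intro a
    ext (p | p) (q | q) <;> simp [B, updateRow_apply]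
  refine ⟨det ((B 0).updateRow (Sum.inr ()) (Sum.elim v 0)), fun a => ?_⟩
  rw [hB, hrow, det_updateRow_add, det_updateRow_smul, updateRow_eq_self, ← hB 0, zero_smul,
    add_zero]

theorem det_add_smul_vecMulVec (M : Matrix n n R) (u v : n → R) (a : R) :
    det (M + a • vecMulVec u v) = det M + a * (det (M + vecMulVec u v) - det M) := by
  obtain ⟨c, hc⟩ := exists_det_add_smul_vecMulVec M u v
  have hc₁ := hc 1
  rw [one_smul] at hc₁
  rw [hc, hc₁]
  ring

theorem det_add_smul_vecMulVec_add_smul_vecMulVec (M : Matrix n n R) (u₁ v₁ u₂ v₂ : n → R)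
    (a b : R) :
    det (M + a • vecMulVec u₁ v₁ + b • vecMulVec u₂ v₂) =
      (det (M + vecMulVec u₁ v₁ + vecMulVec u₂ v₂) - det (M + vecMulVec u₁ v₁)
          - det (M + vecMulVec u₂ v₂) + det M) * (a * b)
        + (det (M + vecMulVec u₁ v₁) - det M) * a + (det (M + vecMulVec u₂ v₂) - det M) * b
        + det M := by
  rw [add_right_comm M (a • _), det_add_smul_vecMulVec, add_right_comm M (b • _),
    det_add_smul_vecMulVec, det_add_smul_vecMulVec]
  ring

end Matrix

theorem Matrix.transpose_mul_diagonal_single_mul {m n R : Type*} [Fintype m] [DecidableEq m]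
    [CommSemiring R] (X : Matrix m n R) (k : m) (c : R) :
    Xᵀ * diagonal (Pi.single k c) * X = vecMulVec (c • X k) (X k) := by
  ext p q
  simp [mul_apply, diagonal_apply, vecMulVec_apply, Pi.single_apply, mul_comm]

theorem coeffs_eq_of_forall_eq_quadratic {K : Type*} [Field K] [NeZero (2 : K)] {f : K → K}
    {A B C D s : K} (hf : ∀ z, f z = A * z * (s - z) + B * z + C * (s - z) + D) (hs : s ≠ 0) :
    A = 2 / s ^ 2 * (2 * f (s / 2) - f 0 - f s) ∧ B = (f s - D) / s ∧ C = (f 0 - D) / s := by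
  refine ⟨?_, ?_, ?_⟩ <;> (simp only [hf]; field_simp; ring)

theorem Fij_eq_det (m d : ℕ) (X : Matrix (Fin m) (Fin d) ℝ) (w : Fin m → ℝ) (n : Fin m → ℕ)
    {i j : Fin m} (hij : i ≠ j) (z : ℝ) :
    Fij m d X w n i j z =
      det (Xᵀ * diagonal (fun k => (if k = i then 0 else if k = j then 0 else (n k : ℝ)) * w k) * X
        + z • vecMulVec (w i • X i) (X i)
        + ((n i + n j : ℝ) - z) • vecMulVec (w j • X j) (X j)) := by
  have hweights :
      (fun k => (if k = i then z else if k = j then ((n i : ℝ) + n j) - z else (n k : ℝ)) * w k)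
        = (fun k => (if k = i then 0 else if k = j then 0 else (n k : ℝ)) * w k)
          + z • Pi.single i (w i) + ((n i + n j : ℝ) - z) • Pi.single j (w j) := by
    ext k
    by_cases hki : k = i
    · subst hki; simp [hij]
    · by_cases hkj : k = j
      · subst hkj; simp [hki]
      · simp [hki, hkj]
  have hadd (d₁ d₂ : Fin m → ℝ) : diagonal (d₁ + d₂) = diagonal d₁ + diagonal d₂ :=
    (diagonal_add d₁ d₂).symm
  rw [Fij, hweights, hadd, hadd, diagonal_smul, diagonal_smul, Matrix.mul_add, Matrix.mul_add,
    Matrix.add_mul, Matrix.add_mul, Matrix.mul_smul, Matrix.mul_smul, Matrix.smul_mul,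
    Matrix.smul_mul, transpose_mul_diagonal_single_mul, transpose_mul_diagonal_single_mul]

theorem exchange_quadratic_form_general (m d : ℕ) (X : Matrix (Fin m) (Fin d) ℝ)
    (w : Fin m → ℝ) (n : Fin m → ℕ) (i j : Fin m) (hij : i < j) :
    ∃ A B C D : ℝ,
      (∀ z : ℝ, Fij m d X w n i j z =
        A * z * (((n i : ℝ) + n j) - z) + B * z + C * (((n i : ℝ) + n j) - z) + D) ∧
      D = (Xᵀ * Matrix.diagonal
            (fun k => (if k = i then 0 else if k = j then 0 else (n k : ℝ)) * w k) * X).det ∧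
      (0 < n i + n j →
        A = 2 / ((n i : ℝ) + n j) ^ 2 *
              (2 * Fij m d X w n i j (((n i : ℝ) + n j) / 2)
                - Fij m d X w n i j 0 - Fij m d X w n i j ((n i : ℝ) + n j)) ∧
        B = (Fij m d X w n i j ((n i : ℝ) + n j) - D) / ((n i : ℝ) + n j) ∧
        C = (Fij m d X w n i j 0 - D) / ((n i : ℝ) + n j)) := by
  set M := Xᵀ * diagonal (fun k => (if k = i then 0 else if k = j then 0 else (n k : ℝ)) * w k) * X
  set P := vecMulVec (w i • X i) (X i)
  set Q := vecMulVec (w j • X j) (X j)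
  have hform (z : ℝ) : Fij m d X w n i j z =
      (det (M + P + Q) - det (M + P) - det (M + Q) + det M) * z * (((n i : ℝ) + n j) - z)
        + (det (M + P) - det M) * z + (det (M + Q) - det M) * (((n i : ℝ) + n j) - z)
        + det M := by
    rw [Fij_eq_det m d X w n hij.ne, det_add_smul_vecMulVec_add_smul_vecMulVec]
    ring
  refine ⟨_, _, _, _, hform, rfl, fun hpos => coeffs_eq_of_forall_eq_quadratic hform ?_⟩
  exact_mod_cast hpos.ne'

/-- f_{ij}(z) = A z(s-z) + B z + C(s-z) + D where D is the criterion value with both the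
i-th and j-th counts set to 0, and, if s > 0, A = (2/s²)(2f_{ij}(s/2) - f_{ij}(0) - f_{ij}(s)),
B = (f_{ij}(s) - D)/s, C = (f_{ij}(0) - D)/s. -/
theorem exchange_quadratic_form (m d : ℕ) (X : Matrix (Fin m) (Fin d) ℝ)
    (w : Fin m → ℝ) (hw : ∀ k, 0 < w k) (n : Fin m → ℕ) (i j : Fin m) (hij : i < j) :
    ∃ A B C D : ℝ,
      (∀ z : ℝ, Fij m d X w n i j z =
        A * z * (((n i : ℝ) + n j) - z) + B * z + C * (((n i : ℝ) + n j) - z) + D) ∧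
      D = (Xᵀ * Matrix.diagonal
            (fun k => (if k = i then 0 else if k = j then 0 else (n k : ℝ)) * w k) * X).det ∧
      (0 < n i + n j →
        A = 2 / ((n i : ℝ) + n j) ^ 2 *
              (2 * Fij m d X w n i j (((n i : ℝ) + n j) / 2)
                - Fij m d X w n i j 0 - Fij m d X w n i j ((n i : ℝ) + n j)) ∧
        B = (Fij m d X w n i j ((n i : ℝ) + n j) - D) / ((n i : ℝ) + n j) ∧
        C = (Fij m d X w n i j 0 - D) / ((n i : ℝ) + n j)) :=
  exchange_quadratic_form_general m d X w n i j hij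
end

section
/- Define f_i(z) = f((1-z)/(1-p_i)·p_1, ..., z (in position i), ..., (1-z)/(1-p_i)·p_m) for 0 ≤ z ≤ 1, where f(p) = det(X'diag(p_1w_1,...,p_mw_m)X) and p_i < 1. Then f_i(z) = a·z·(1-z)^{d-1} + b·(1-z)^d for some constants a ≥ 0 and b ≥ 0; moreover b = f_i(0), and if p_i > 0 then a = (f(p) - b(1-p_i)^d)/(p_i(1-p_i)^{d-1}), while if p_i = 0 then a = 2^d·f_i(1/2) - b. -/
open Matrix

/-- The D-criterion f(p) = det(Xᵀ diag(p₁w₁,...,pₘwₘ) X). -/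
noncomputable def fdet (m d : ℕ) (X : Matrix (Fin m) (Fin d) ℝ) (w p : Fin m → ℝ) : ℝ :=
  (Xᵀ * Matrix.diagonal (fun i => p i * w i) * X).det

/-- The lift-one function fᵢ(z): pᵢ is replaced by z and the other coordinates are
rescaled by (1-z)/(1-pᵢ). -/
noncomputable def liftOne (m d : ℕ) (X : Matrix (Fin m) (Fin d) ℝ) (w p : Fin m → ℝ)
    (i : Fin m) (z : ℝ) : ℝ :=
  fdet m d X w (fun k => if k = i then z else (1 - z) / (1 - p i) * p k)

/-!
Write `B` for the information matrix of the design at `z = 0` and `x` for the `i`-th row of `X`.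
The weights of the lifted design are affine in `z`, so `fᵢ(z) = det((1 - z) B + z wᵢ x xᵀ)`, and the
matrix determinant lemma `det(s B + t x xᵀ) = sᵈ det B + t sᵈ⁻¹ xᵀ adj(B) x` gives the form with
`b = det B = fᵢ(0)` and `a = wᵢ xᵀ adj(B) x`. Both are nonnegative since
`b + t a = det(B + t wᵢ x xᵀ)` is the determinant of a positive semidefinite matrix for every
`t ≥ 0`.
-/

theorem nonneg_of_forall_nonneg_add_mul {K : Type*} [Field K] [LinearOrder K]
    [IsStrictOrderedRing K] {a b : K} (h : ∀ t, 0 ≤ t → 0 ≤ b + t * a) : 0 ≤ a := by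
  by_contra! ha
  have := h ((b + 1) / -a) (div_nonneg (by linarith [h 0 le_rfl]) (by linarith))
  rw [div_mul_eq_mul_div, div_neg, mul_div_assoc, div_self ha.ne] at this
  linarith

namespace Matrix

section DeterminantLemma

variable {n : Type*} [Fintype n] [DecidableEq n]

theorem det_add_vecMulVec_of_det_ne_zero {K : Type*} [Field K] {A : Matrix n n K}
    (hA : A.det ≠ 0) (u v : n → K) :
    (A + vecMulVec u v).det = A.det + v ⬝ᵥ A.adjugate *ᵥ u := by
  have hadj : A.det • A⁻¹ = A.adjugate := by
    rw [inv_def, smul_smul, Ring.inverse_eq_inv, mul_inv_cancel₀ hA, one_smul]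
  rw [vecMulVec_eq Unit, det_add_replicateCol_mul_replicateRow (isUnit_iff_ne_zero.mpr hA),
    det_unique (1 + replicateRow Unit v * A⁻¹ * replicateCol Unit u), add_apply, one_apply_eq,
    ← replicateRow_vecMul, replicateRow_mul_replicateCol_apply, ← dotProduct_mulVec, ← hadj,
    smul_mulVec, dotProduct_smul, smul_eq_mul]
  ring

theorem finite_setOf_det_add_smul_one_eq_zero (A : Matrix n n ℝ) :
    {ε : ℝ | (A + ε • (1 : Matrix n n ℝ)).det = 0}.Finite := by
  refine (Polynomial.finite_setOfPred_isRoot (charpoly_monic (-A)).ne_zero).subset fun ε hε => ?_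
  simp only [Set.mem_ofPred_eq, Polynomial.IsRoot.def, eval_charpoly] at hε ⊢
  rw [← hε, scalar_apply, ← smul_one_eq_diagonal, sub_neg_eq_add, add_comm]

/-- The invertible case extends by continuity, since `A + ε • 1` is invertible for all but finitely
many `ε`. -/
theorem det_add_vecMulVec (A : Matrix n n ℝ) (u v : n → ℝ) :
    (A + vecMulVec u v).det = A.det + v ⬝ᵥ A.adjugate *ᵥ u := by
  let Aε : ℝ → Matrix n n ℝ := fun ε => A + ε • 1
  have hAε : Continuous Aε := continuous_const.add (continuous_id.smul continuous_const)
  have h : (fun ε => (Aε ε + vecMulVec u v).det)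
      = fun ε => (Aε ε).det + v ⬝ᵥ (Aε ε).adjugate *ᵥ u :=
    Continuous.ext_on ((finite_setOf_det_add_smul_one_eq_zero A).countable.dense_compl ℝ)
      (hAε.add continuous_const).matrix_det
      (hAε.matrix_det.add <| continuous_const.dotProduct <|
        hAε.matrix_adjugate.matrix_mulVec continuous_const)
      fun ε hε => det_add_vecMulVec_of_det_ne_zero hε u v
  simpa [Aε] using congrFun h 0

theorem det_smul_add_smul_vecMulVec (A : Matrix n n ℝ) (u v : n → ℝ) (s t : ℝ) :
    (s • A + t • vecMulVec u v).det
      = s ^ Fintype.card n * A.det + t * s ^ (Fintype.card n - 1) * (v ⬝ᵥ A.adjugate *ᵥ u) := by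
  rw [← vecMulVec_smul, det_add_vecMulVec, det_smul, adjugate_smul, smul_mulVec,
    dotProduct_smul, smul_dotProduct, smul_eq_mul, smul_eq_mul]
  ring

end DeterminantLemma

section WeightedGram

variable {m n : Type*} [Fintype m] [DecidableEq m]

noncomputable def weightedGram (X : Matrix m n ℝ) (e : m → ℝ) : Matrix n n ℝ := Xᵀ * diagonal e * X

theorem weightedGram_smul_add_smul (X : Matrix m n ℝ) (e e' : m → ℝ) (s t : ℝ) :
    weightedGram X (s • e + t • e') = s • weightedGram X e + t • weightedGram X e' := by
  have hdiag : diagonal (s • e + t • e') = s • diagonal e + t • diagonal e' := by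
    rw [← diagonal_smul, ← diagonal_smul, diagonal_add]
    rfl
  rw [weightedGram, hdiag, Matrix.mul_add, Matrix.add_mul, Matrix.mul_smul, Matrix.smul_mul,
    Matrix.mul_smul, Matrix.smul_mul]
  rfl

theorem weightedGram_single (X : Matrix m n ℝ) (i : m) (c : ℝ) :
    weightedGram X (Pi.single i c) = c • vecMulVec (X i) (X i) := by
  ext j k
  simp [weightedGram, mul_apply, diagonal, vecMulVec_apply, Pi.single_apply, mul_comm,
    mul_left_comm]

theorem det_weightedGram_nonneg [Fintype n] [DecidableEq n] (X : Matrix m n ℝ) {e : m → ℝ}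
    (he : 0 ≤ e) : 0 ≤ (weightedGram X e).det := by
  simpa [weightedGram, conjTranspose_eq_transpose_of_trivial] using
    ((posSemidef_diagonal_iff.mpr he).conjTranspose_mul_mul_same X).det_nonneg

end WeightedGram

end Matrix

noncomputable def liftWeights {ι : Type*} [DecidableEq ι] (p : ι → ℝ) (i : ι) (z : ℝ) : ι → ℝ :=
  fun k => if k = i then z else (1 - z) / (1 - p i) * p k

section LiftOne

variable {m d : ℕ} (X : Matrix (Fin m) (Fin d) ℝ) (w p : Fin m → ℝ) (i : Fin m)

noncomputable def liftSlope : ℝ :=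
  w i * (X i ⬝ᵥ (weightedGram X (liftWeights p i 0 * w)).adjugate *ᵥ X i)

theorem liftOne_eq_det_weightedGram (z : ℝ) :
    liftOne m d X w p i z = (weightedGram X (liftWeights p i z * w)).det :=
  rfl

theorem liftWeights_mul_eq (z : ℝ) :
    liftWeights p i z * w = (1 - z) • (liftWeights p i 0 * w) + z • Pi.single i (w i) := by
  funext k
  by_cases hk : k = i
  · subst hk; simp [liftWeights]
  · simp [liftWeights, hk, div_eq_inv_mul, mul_assoc, mul_left_comm]

theorem liftWeights_zero_nonneg (hp : 0 ≤ p) (hpi : p i ≤ 1) : 0 ≤ liftWeights p i 0 := by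
  intro k
  by_cases hk : k = i
  · simp [liftWeights, hk]
  · simpa [liftWeights, hk] using mul_nonneg (inv_nonneg.mpr (sub_nonneg.mpr hpi)) (hp k)

theorem liftWeights_self (hpi : p i ≠ 1) : liftWeights p i (p i) = p := by
  funext k
  by_cases hk : k = i
  · simp [liftWeights, hk]
  · simp [liftWeights, hk, div_self (sub_ne_zero.mpr hpi.symm)]

theorem det_weightedGram_liftWeights_add_single (s t : ℝ) :
    (weightedGram X (s • (liftWeights p i 0 * w) + t • Pi.single i (w i))).det
      = s ^ d * liftOne m d X w p i 0 + t * s ^ (d - 1) * liftSlope X w p i := by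
  rw [weightedGram_smul_add_smul, weightedGram_single, smul_smul, det_smul_add_smul_vecMulVec,
    Fintype.card_fin, liftOne_eq_det_weightedGram, liftSlope]
  ring

theorem liftOne_eq_slope_add (z : ℝ) :
    liftOne m d X w p i z
      = liftSlope X w p i * z * (1 - z) ^ (d - 1) + liftOne m d X w p i 0 * (1 - z) ^ d := by
  rw [liftOne_eq_det_weightedGram, liftWeights_mul_eq, det_weightedGram_liftWeights_add_single]
  ring

theorem liftOne_zero_nonneg (hw : 0 ≤ w) (hp : 0 ≤ p) (hpi : p i ≤ 1) :
    0 ≤ liftOne m d X w p i 0 :=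
  det_weightedGram_nonneg X (mul_nonneg (liftWeights_zero_nonneg p i hp hpi) hw)

theorem liftSlope_nonneg (hw : 0 ≤ w) (hp : 0 ≤ p) (hpi : p i ≤ 1) :
    0 ≤ liftSlope X w p i := by
  refine nonneg_of_forall_nonneg_add_mul (b := liftOne m d X w p i 0) fun t ht => ?_
  have h := det_weightedGram_liftWeights_add_single X w p i 1 t
  rw [one_pow, one_pow, one_mul, mul_one] at h
  rw [← h]
  exact det_weightedGram_nonneg X (add_nonneg
    (smul_nonneg zero_le_one (mul_nonneg (liftWeights_zero_nonneg p i hp hpi) hw))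
    (smul_nonneg ht (Pi.single_nonneg.mpr (hw i))))

end LiftOne

theorem liftone_form_general (m d : ℕ) (X : Matrix (Fin m) (Fin d) ℝ) (w : Fin m → ℝ)
    (hw : ∀ k, 0 < w k) (p : Fin m → ℝ) (hp : ∀ k, 0 ≤ p k)
    (i : Fin m) (hpi : p i < 1) :
    ∃ a b : ℝ, 0 ≤ a ∧ 0 ≤ b ∧
      (∀ z ∈ Set.Icc (0:ℝ) 1,
        liftOne m d X w p i z = a * z * (1 - z) ^ (d - 1) + b * (1 - z) ^ d) ∧
      b = liftOne m d X w p i 0 ∧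
      (0 < p i → a = (fdet m d X w p - b * (1 - p i) ^ d) / (p i * (1 - p i) ^ (d - 1))) ∧
      (p i = 0 → a = 2 ^ d * liftOne m d X w p i (1/2) - b) := by
  have hw' : 0 ≤ w := fun k => (hw k).le
  refine ⟨liftSlope X w p i, liftOne m d X w p i 0, liftSlope_nonneg X w p i hw' hp hpi.le,
    liftOne_zero_nonneg X w p i hw' hp hpi.le, fun z _ => liftOne_eq_slope_add X w p i z, rfl,
    fun hpos => ?_, fun _ => ?_⟩
  · have hfp : fdet m d X w p = liftOne m d X w p i (p i) := by
      rw [liftOne_eq_det_weightedGram, liftWeights_self p i hpi.ne]; rfl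
    have hs : 0 < 1 - p i := sub_pos.mpr hpi
    rw [hfp, liftOne_eq_slope_add, eq_div_iff (by positivity)]
    ring
  · rw [liftOne_eq_slope_add]
    rcases d with _ | k
    · simp [liftSlope]
    · have h2 : (2 : ℝ) ^ k * (1 / 2) ^ k = 1 := by rw [← mul_pow]; norm_num
      rw [Nat.add_sub_cancel]
      linear_combination (-liftSlope X w p i - liftOne m (k + 1) X w p i 0) * h2

/-- fᵢ(z) = a z (1-z)^{d-1} + b (1-z)^d on [0,1] with a, b ≥ 0, where b = fᵢ(0);
if pᵢ > 0 then a = (f(p) - b(1-pᵢ)^d)/(pᵢ(1-pᵢ)^{d-1}), and if pᵢ = 0 then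
a = 2^d fᵢ(1/2) - b. -/
theorem liftone_form (m d : ℕ) (X : Matrix (Fin m) (Fin d) ℝ) (w : Fin m → ℝ)
    (hw : ∀ k, 0 < w k) (p : Fin m → ℝ) (hp : ∀ k, 0 ≤ p k) (hp1 : ∑ k, p k = 1)
    (hf : 0 < fdet m d X w p) (i : Fin m) (hpi : p i < 1) :
    ∃ a b : ℝ, 0 ≤ a ∧ 0 ≤ b ∧
      (∀ z ∈ Set.Icc (0:ℝ) 1,
        liftOne m d X w p i z = a * z * (1 - z) ^ (d - 1) + b * (1 - z) ^ d) ∧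
      b = liftOne m d X w p i 0 ∧
      (0 < p i → a = (fdet m d X w p - b * (1 - p i) ^ d) / (p i * (1 - p i) ^ (d - 1))) ∧
      (p i = 0 → a = 2 ^ d * liftOne m d X w p i (1/2) - b) :=
  liftone_form_general m d X w hw p hp i hpi
end

section
/- Let d = 4 and X be the 6×4 matrix with rows (1,1,1,1),(1,1,0,-2),(1,1,-1,1),(1,-1,1,1),(1,-1,0,-2),(1,-1,-1,1), and w_i > 0 with v_i = 1/w_i. The saturated design p_1 = p_2 = p_3 = p_4 = 1/4 (zero elsewhere) is D-optimal if and only if v_5 ≥ v_1 + v_2 + v_4 and v_6 ≥ v_1 + v_3 + v_4. -/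
/-! By Cauchy–Binet the objective is `144 * detPoly (p * w)`. For sufficiency, `detPoly q` is
dominated by `(q₀ + q₄ + q₅)(q₁ + q₄)(q₂ + q₅)(q₃ + q₄ + q₅)`; under the two conditions these four
factors, divided by `w₀, w₁, w₂, w₃`, sum to at most `1`, so AM–GM bounds the product by
`w₀w₁w₂w₃/256`, the value at the saturated design. For necessity, moving mass `t` from the
saturated design to the vertex `4` multiplies the objective by `(1 - t)³ (1 - t + 4tc)` with
`c = w₄ (w₀⁻¹ + w₁⁻¹ + w₃⁻¹)`; its right derivative at `0` is `4 (c - 1)`, so `c ≤ 1`.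
Vertex `5` is the same. -/

open Matrix

/-- 2×3 factorial design matrix with columns I, A, B_l, B_q. -/
def X16 : Matrix (Fin 6) (Fin 4) ℝ :=
  !![1, 1, 1, 1; 1, 1, 0, -2; 1, 1, -1, 1; 1, -1, 1, 1; 1, -1, 0, -2; 1, -1, -1, 1]

open Set Filter Topology

/-- By Cauchy–Binet, `det (X16ᵀ * diagonal q * X16) = ∑ |I| = 4, det (X16[I])² * ∏ i ∈ I, q i`.
Here `det (X16[I])² = 144` for twelve of the fifteen row sets `I`; the other three,
`{0, 1, 3, 4}`, `{0, 2, 3, 5}` and `{1, 2, 4, 5}`, are singular. -/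
def detPoly (q : Fin 6 → ℝ) : ℝ :=
  q 0 * q 1 * q 2 * q 3 + q 0 * q 1 * q 2 * q 4 + q 0 * q 1 * q 2 * q 5 + q 0 * q 1 * q 3 * q 5
    + q 0 * q 1 * q 4 * q 5 + q 0 * q 2 * q 3 * q 4 + q 0 * q 2 * q 4 * q 5 + q 0 * q 3 * q 4 * q 5
    + q 1 * q 2 * q 3 * q 4 + q 1 * q 2 * q 3 * q 5 + q 1 * q 3 * q 4 * q 5 + q 2 * q 3 * q 4 * q 5

theorem det_transpose_mul_diagonal_mul_X16 (q : Fin 6 → ℝ) :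
    (X16ᵀ * diagonal q * X16).det = 144 * detPoly q := by
  rw [det_succ_row_zero, Fin.sum_univ_four]
  simp [det_fin_three, mul_apply, Fin.sum_univ_six, X16, Fin.succAbove, detPoly]
  ring

theorem detPoly_le_prod (q : Fin 6 → ℝ) (hq : ∀ i, 0 ≤ q i) :
    detPoly q ≤ (q 0 + q 4 + q 5) * (q 1 + q 4) * (q 2 + q 5) * (q 3 + q 4 + q 5) := by
  have := hq 0; have := hq 1; have := hq 2; have := hq 3; have := hq 4; have := hq 5
  have hrest : (q 0 + q 4 + q 5) * (q 1 + q 4) * (q 2 + q 5) * (q 3 + q 4 + q 5) = detPoly q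
      + (q 0 * q 1 * q 5 ^ 2 + q 0 * q 2 * q 4 ^ 2 + q 0 * q 4 ^ 2 * q 5 + q 0 * q 4 * q 5 ^ 2
        + q 1 * q 2 * q 4 ^ 2 + 2 * q 1 * q 2 * q 4 * q 5 + q 1 * q 2 * q 5 ^ 2
        + q 1 * q 3 * q 5 ^ 2 + q 1 * q 4 ^ 2 * q 5 + 2 * q 1 * q 4 * q 5 ^ 2 + q 1 * q 5 ^ 3
        + q 2 * q 3 * q 4 ^ 2 + q 2 * q 4 ^ 3 + 2 * q 2 * q 4 ^ 2 * q 5 + q 2 * q 4 * q 5 ^ 2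
        + q 3 * q 4 ^ 2 * q 5 + q 3 * q 4 * q 5 ^ 2 + q 4 ^ 3 * q 5 + 2 * q 4 ^ 2 * q 5 ^ 2 + q 4 * q 5 ^ 3) := by
    unfold detPoly; ring
  rw [hrest]
  exact le_add_of_nonneg_right (by positivity)

theorem mul_mul_mul_le_add_div_four_pow {a b c d : ℝ} (ha : 0 ≤ a) (hb : 0 ≤ b) (hc : 0 ≤ c)
    (hd : 0 ≤ d) : a * b * c * d ≤ ((a + b + c + d) / 4) ^ 4 := by
  have hab : a * b ≤ ((a + b) / 2) ^ 2 := by nlinarith [sq_nonneg (a - b)]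
  have hcd : c * d ≤ ((c + d) / 2) ^ 2 := by nlinarith [sq_nonneg (c - d)]
  have hmid : (a + b) / 2 * ((c + d) / 2) ≤ ((a + b + c + d) / 4) ^ 2 := by
    nlinarith [sq_nonneg (a + b - c - d)]
  calc a * b * c * d = (a * b) * (c * d) := by ring
    _ ≤ ((a + b) / 2) ^ 2 * ((c + d) / 2) ^ 2 := by gcongr
    _ = ((a + b) / 2 * ((c + d) / 2)) ^ 2 := by ring
    _ ≤ (((a + b + c + d) / 4) ^ 2) ^ 2 := by gcongr
    _ = ((a + b + c + d) / 4) ^ 4 := by ring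

theorem mul_mul_mul_le_of_sum_div_le_one {x₀ x₁ x₂ x₃ u₀ u₁ u₂ u₃ : ℝ} (hx₀ : 0 ≤ x₀) (hx₁ : 0 ≤ x₁)
    (hx₂ : 0 ≤ x₂) (hx₃ : 0 ≤ x₃) (hu₀ : 0 < u₀) (hu₁ : 0 < u₁) (hu₂ : 0 < u₂) (hu₃ : 0 < u₃)
    (h : x₀ / u₀ + x₁ / u₁ + x₂ / u₂ + x₃ / u₃ ≤ 1) :
    x₀ * x₁ * x₂ * x₃ ≤ u₀ * u₁ * u₂ * u₃ / 256 := by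
  have hamgm := mul_mul_mul_le_add_div_four_pow (div_nonneg hx₀ hu₀.le) (div_nonneg hx₁ hu₁.le)
    (div_nonneg hx₂ hu₂.le) (div_nonneg hx₃ hu₃.le)
  have hmean : ((x₀ / u₀ + x₁ / u₁ + x₂ / u₂ + x₃ / u₃) / 4) ^ 4 ≤ (1 / 4) ^ 4 := by
    gcongr
  have hu : 0 < u₀ * u₁ * u₂ * u₃ := by positivity
  calc x₀ * x₁ * x₂ * x₃ = u₀ * u₁ * u₂ * u₃ * (x₀ / u₀ * (x₁ / u₁) * (x₂ / u₂) * (x₃ / u₃)) := by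
        field_simp
    _ ≤ u₀ * u₁ * u₂ * u₃ * (1 / 4) ^ 4 := by gcongr; exact hamgm.trans hmean
    _ = u₀ * u₁ * u₂ * u₃ / 256 := by ring

noncomputable def saturatedDesign : Fin 6 → ℝ :=
  fun i => if i = 0 ∨ i = 1 ∨ i = 2 ∨ i = 3 then 4⁻¹ else 0

theorem saturatedDesign_mem_stdSimplex : saturatedDesign ∈ stdSimplex ℝ (Fin 6) := by
  refine ⟨fun i => ?_, ?_⟩
  · unfold saturatedDesign; split_ifs <;> norm_num
  · simp only [saturatedDesign, Fin.sum_univ_six, Fin.isValue, Fin.reduceEq, or_self, or_false,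
      or_true, ↓reduceIte]
    norm_num

theorem detPoly_saturatedDesign (w : Fin 6 → ℝ) :
    detPoly (fun i => saturatedDesign i * w i) = w 0 * w 1 * w 2 * w 3 / 256 := by
  simp only [detPoly, saturatedDesign, Fin.isValue, Fin.reduceEq, or_self, or_false, or_true,
    ↓reduceIte, zero_mul, mul_zero, add_zero]
  ring

theorem detPoly_le_of_mul_sum_inv_le_one {w p : Fin 6 → ℝ} (hw : ∀ i, 0 < w i)
    (h₄ : w 4 * ((w 0)⁻¹ + (w 1)⁻¹ + (w 3)⁻¹) ≤ 1) (h₅ : w 5 * ((w 0)⁻¹ + (w 2)⁻¹ + (w 3)⁻¹) ≤ 1)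
    (hp : p ∈ stdSimplex ℝ (Fin 6)) :
    detPoly (fun i => p i * w i) ≤ w 0 * w 1 * w 2 * w 3 / 256 := by
  obtain ⟨hp0, hp1⟩ := hp
  have hq i : 0 ≤ p i * w i := mul_nonneg (hp0 i) (hw i).le
  have := hq 0; have := hq 1; have := hq 2; have := hq 3; have := hq 4; have := hq 5
  have := hw 0; have := hw 1; have := hw 2; have := hw 3
  refine (detPoly_le_prod _ hq).trans (mul_mul_mul_le_of_sum_div_le_one (by positivity)
    (by positivity) (by positivity) (by positivity) (hw 0) (hw 1) (hw 2) (hw 3) ?_)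
  have hsum : (p 0 * w 0 + p 4 * w 4 + p 5 * w 5) / w 0 + (p 1 * w 1 + p 4 * w 4) / w 1
      + (p 2 * w 2 + p 5 * w 5) / w 2 + (p 3 * w 3 + p 4 * w 4 + p 5 * w 5) / w 3
      = p 0 + p 1 + p 2 + p 3 + p 4 * (w 4 * ((w 0)⁻¹ + (w 1)⁻¹ + (w 3)⁻¹))
        + p 5 * (w 5 * ((w 0)⁻¹ + (w 2)⁻¹ + (w 3)⁻¹)) := by
    field_simp
    ring
  rw [Fin.sum_univ_six] at hp1
  rw [hsum]
  linarith [mul_le_of_le_one_right (hp0 4) h₄, mul_le_of_le_one_right (hp0 5) h₅]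

theorem le_one_of_forall_segment_le {c : ℝ}
    (h : ∀ t ∈ Icc (0 : ℝ) 1, (1 - t) ^ 3 * (1 - t + 4 * t * c) ≤ 1) : c ≤ 1 := by
  -- `(1 - t) ^ 3 * (1 - t + 4 * t * c) - 1 = t * g t`, so `g ≤ 0` to the right of `0`
  set g : ℝ → ℝ := fun t => 4 * (c - 1) * (1 - t) ^ 3 - t * (6 - 8 * t + 3 * t ^ 2)
  have hg : ∀ᶠ t in 𝓝[>] 0, g t ≤ 0 := by
    filter_upwards [Ioc_mem_nhdsGT one_pos] with t ⟨ht0, ht1⟩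
    refine nonpos_of_mul_nonpos_right ?_ ht0
    have := h t ⟨ht0.le, ht1⟩
    simp only [g]
    linear_combination this
  have hlim : Tendsto g (𝓝[>] 0) (𝓝 (g 0)) :=
    ((by fun_prop : Continuous g).tendsto 0).mono_left nhdsWithin_le_nhds
  have := le_of_tendsto hlim hg
  simp only [g] at this
  linarith

theorem detPoly_lineMap_four {w : Fin 6 → ℝ} (hw : ∀ i, 0 < w i) (t : ℝ) :
    detPoly (fun i => AffineMap.lineMap saturatedDesign (Pi.single 4 1) t i * w i)
      = (1 - t) ^ 3 * (1 - t + 4 * t * (w 4 * ((w 0)⁻¹ + (w 1)⁻¹ + (w 3)⁻¹)))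
        * (w 0 * w 1 * w 2 * w 3 / 256) := by
  have := (hw 0).ne'; have := (hw 1).ne'; have := (hw 3).ne'
  simp only [detPoly, saturatedDesign, AffineMap.lineMap_apply_module, Pi.add_apply, Pi.smul_apply,
    smul_eq_mul, Pi.single_apply, Fin.reduceEq, or_self, or_false, or_true, ↓reduceIte]
  field_simp
  ring

theorem detPoly_lineMap_five {w : Fin 6 → ℝ} (hw : ∀ i, 0 < w i) (t : ℝ) :
    detPoly (fun i => AffineMap.lineMap saturatedDesign (Pi.single 5 1) t i * w i)
      = (1 - t) ^ 3 * (1 - t + 4 * t * (w 5 * ((w 0)⁻¹ + (w 2)⁻¹ + (w 3)⁻¹)))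
        * (w 0 * w 1 * w 2 * w 3 / 256) := by
  have := (hw 0).ne'; have := (hw 2).ne'; have := (hw 3).ne'
  simp only [detPoly, saturatedDesign, AffineMap.lineMap_apply_module, Pi.add_apply, Pi.smul_apply,
    smul_eq_mul, Pi.single_apply, Fin.reduceEq, or_self, or_false, or_true, ↓reduceIte]
  field_simp
  ring

theorem le_one_of_forall_detPoly_le {w : Fin 6 → ℝ} (hw : ∀ i, 0 < w i)
    (hmax : ∀ p ∈ stdSimplex ℝ (Fin 6), detPoly (fun i => p i * w i) ≤ w 0 * w 1 * w 2 * w 3 / 256)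
    {j : Fin 6} {c : ℝ}
    (hline : ∀ t, detPoly (fun i => AffineMap.lineMap saturatedDesign (Pi.single j 1) t i * w i)
      = (1 - t) ^ 3 * (1 - t + 4 * t * c) * (w 0 * w 1 * w 2 * w 3 / 256)) :
    c ≤ 1 := by
  have := hw 0; have := hw 1; have := hw 2; have := hw 3
  refine le_one_of_forall_segment_le fun t ht => ?_
  have := hmax _ ((convex_stdSimplex ℝ (Fin 6)).lineMap_mem saturatedDesign_mem_stdSimplex
    (single_mem_stdSimplex ℝ j) ht)
  rwa [hline, mul_le_iff_le_one_left (by positivity)] at this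

/-- The saturated design p₁ = p₂ = p₃ = p₄ = 1/4 is D-optimal iff
v₅ ≥ v₁ + v₂ + v₄ and v₆ ≥ v₁ + v₃ + v₄, where vᵢ = 1/wᵢ. -/
theorem saturated_2x3_factorial_example (w : Fin 6 → ℝ) (hw : ∀ i, 0 < w i) :
    IsMaxOn (fun p : Fin 6 → ℝ =>
        (X16ᵀ * Matrix.diagonal (fun i => p i * w i) * X16).det)
      {p : Fin 6 → ℝ | (∀ i, 0 ≤ p i) ∧ ∑ i, p i = 1}
      (fun i => if i = 0 ∨ i = 1 ∨ i = 2 ∨ i = 3 then (4:ℝ)⁻¹ else 0) ↔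
    ((w 4)⁻¹ ≥ (w 0)⁻¹ + (w 1)⁻¹ + (w 3)⁻¹ ∧
     (w 5)⁻¹ ≥ (w 0)⁻¹ + (w 2)⁻¹ + (w 3)⁻¹) := by
  change IsMaxOn _ (stdSimplex ℝ (Fin 6)) saturatedDesign ↔ _
  have hinv (j : Fin 6) (s : ℝ) : s ≤ (w j)⁻¹ ↔ w j * s ≤ 1 := by
    simpa using le_inv_mul_iff₀ (hw j) (b := 1)
  simp only [isMaxOn_iff, det_transpose_mul_diagonal_mul_X16, detPoly_saturatedDesign, ge_iff_le,
    hinv, mul_le_mul_iff_right₀ (by norm_num : (0 : ℝ) < 144)]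
  constructor
  · intro hmax
    exact ⟨le_one_of_forall_detPoly_le hw hmax (detPoly_lineMap_four hw),
      le_one_of_forall_detPoly_le hw hmax (detPoly_lineMap_five hw)⟩
  · rintro ⟨h₄, h₅⟩ p hp
    exact detPoly_le_of_mul_sum_inv_le_one hw h₄ h₅ hp
end
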